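/- Let σ₁, σ₂ be positive with σ₁ ≤ σ₂, let σ_∞ : [0,∞) → [σ₁,σ₂] be continuous, and define σ̄(t) := √((1/t)∫₀^t σ_∞(s)² ds). Then for all 0 < r < t with r ≤ t/2: |σ̄^r(t−r)·√(t−r)/(σ̄(t)·√t) − 1| ≤ (σ₂²/σ₁²)·(r/(t−r)) + (σ₂/σ₁)·(r/t) ≤ 4(σ₂²/σ₁²)·(r/t), where σ̄^r(u) := √((1/u)∫₀^u σ_∞(r+s)² ds). -/

import Mathlib

open Real Set MeasureTheory

/-!
Both products are square roots of integrals of `σ_∞²`: `σ̄(t)√t = √I` with `I = ∫₀ᵗ σ_∞²` and,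
after a shift, `σ̄^r(t - r)√(t - r) = √J` with `J = ∫ᵣᵗ σ_∞²`. Since `0 ≤ J ≤ I`, the ratio
`x = √(J / I)` lies in `[0, 1]`, so `1 - x ≤ 1 - x² = (∫₀ʳ σ_∞²) / I ≤ σ₂² r / (σ₁² t)`.
The second inequality is arithmetic: `r / (t - r) ≤ 2 r / t` for `r ≤ t / 2`, and
`σ₂ / σ₁ ≤ σ₂² / σ₁²` since `σ₂ / σ₁ ≥ 1`.
-/

lemma abs_sqrt_div_sqrt_sub_one_le {J I : ℝ} (hJ : 0 ≤ J) (hJI : J ≤ I) (hI : 0 < I) :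
    |√J / √I - 1| ≤ (I - J) / I := by
  rw [← sqrt_div hJ]
  set x := √(J / I)
  have hx0 : 0 ≤ x := sqrt_nonneg _
  have hx1 : x ≤ 1 := sqrt_le_one.mpr ((div_le_one hI).mpr hJI)
  have hxsq : x ^ 2 = J / I := sq_sqrt (div_nonneg hJ hI.le)
  have hdiff : (I - J) / I = 1 - x ^ 2 := by rw [hxsq]; field_simp
  rw [abs_of_nonpos (by linarith), hdiff]
  nlinarith

lemma sqrt_one_div_mul_mul_sqrt {u : ℝ} (hu : 0 < u) (I : ℝ) : √(1 / u * I) * √u = √I := by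
  rw [← sqrt_mul' _ hu.le]
  congr 1
  field_simp

section IntervalIntegral

variable {f : ℝ → ℝ} {a b c : ℝ}

lemma const_mul_sub_le_intervalIntegral (hab : a ≤ b) (hf : IntervalIntegrable f volume a b)
    (h : ∀ x ∈ Icc a b, c ≤ f x) : c * (b - a) ≤ ∫ x in a..b, f x := by
  simpa [mul_comm] using intervalIntegral.integral_mono_on hab intervalIntegrable_const hf h

lemma intervalIntegral_le_const_mul_sub (hab : a ≤ b) (hf : IntervalIntegrable f volume a b)
    (h : ∀ x ∈ Icc a b, f x ≤ c) : ∫ x in a..b, f x ≤ c * (b - a) := by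
  simpa [mul_comm] using intervalIntegral.integral_mono_on hab hf intervalIntegrable_const h

end IntervalIntegral

lemma abs_sqrt_intervalIntegral_div_sub_one_le {g : ℝ → ℝ} {m M r t : ℝ} (hm : 0 < m)
    (hg : ContinuousOn g (Ici 0)) (hbound : ∀ s, 0 ≤ s → g s ∈ Icc m M)
    (hr : 0 ≤ r) (hrt : r ≤ t) (ht : 0 < t) :
    |√(∫ s in r..t, g s) / √(∫ s in (0:ℝ)..t, g s) - 1| ≤ M * r / (m * t) := by
  have hint : ∀ a b, 0 ≤ a → a ≤ b → IntervalIntegrable g volume a b := fun a b ha hab =>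
    (hg.mono fun x hx => ha.trans (by rw [uIcc_of_le hab] at hx; exact hx.1)).intervalIntegrable
  have hsplit := intervalIntegral.integral_add_adjacent_intervals
    (hint 0 r le_rfl hr) (hint r t hr hrt)
  have hJ : m * (t - r) ≤ ∫ s in r..t, g s := const_mul_sub_le_intervalIntegral hrt
    (hint r t hr hrt) fun x hx => (hbound x (hr.trans hx.1)).1
  have hI : m * (t - 0) ≤ ∫ s in (0:ℝ)..t, g s := const_mul_sub_le_intervalIntegral ht.le
    (hint 0 t le_rfl ht.le) fun x hx => (hbound x hx.1).1
  have hI0r : ∫ s in (0:ℝ)..r, g s ≤ M * (r - 0) := intervalIntegral_le_const_mul_sub hr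
    (hint 0 r le_rfl hr) fun x hx => (hbound x hx.1).2
  have hI0r₀ : 0 ≤ ∫ s in (0:ℝ)..r, g s := intervalIntegral.integral_nonneg hr
    fun x hx => hm.le.trans (hbound x hx.1).1
  have hmt : 0 < m * t := mul_pos hm ht
  calc |√(∫ s in r..t, g s) / √(∫ s in (0:ℝ)..t, g s) - 1|
      ≤ ((∫ s in (0:ℝ)..t, g s) - ∫ s in r..t, g s) / ∫ s in (0:ℝ)..t, g s :=
        abs_sqrt_div_sqrt_sub_one_le (by nlinarith) (by linarith) (by nlinarith)
    _ ≤ M * r / (m * t) := by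
        rw [← hsplit, add_sub_cancel_right]
        gcongr <;> linarith

lemma div_sub_le_two_mul_div {r t : ℝ} (hr : 0 < r) (hrt : r ≤ t / 2) :
    r / (t - r) ≤ 2 * (r / t) :=
  calc r / (t - r) ≤ r / (t / 2) := div_le_div_of_nonneg_left hr.le (by linarith) (by linarith)
    _ = 2 * (r / t) := by ring

lemma div_le_div_sq {σ₁ σ₂ : ℝ} (hσ₁ : 0 < σ₁) (hσ₁₂ : σ₁ ≤ σ₂) :
    σ₂ / σ₁ ≤ σ₂ ^ 2 / σ₁ ^ 2 := by
  have h1 : 1 ≤ σ₂ / σ₁ := (one_le_div hσ₁).mpr hσ₁₂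
  rw [← div_pow]
  nlinarith

theorem stmt_18_general (σ₁ σ₂ : ℝ) (hσ₁ : 0 < σ₁) (hσ₁₂ : σ₁ ≤ σ₂)
    (σinf : ℝ → ℝ) (hcont : ContinuousOn σinf (Ici 0))
    (hrange : ∀ s, 0 ≤ s → σinf s ∈ Icc σ₁ σ₂) :
    let σbar : ℝ → ℝ := fun t => Real.sqrt ((1 / t) * ∫ s in (0:ℝ)..t, σinf s ^ 2)
    let σbarr : ℝ → ℝ → ℝ := fun r u => Real.sqrt ((1 / u) * ∫ s in (0:ℝ)..u, σinf (r + s) ^ 2)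
    ∀ r t : ℝ, 0 < r → r < t → r ≤ t / 2 →
      |σbarr r (t - r) * Real.sqrt (t - r) / (σbar t * Real.sqrt t) - 1|
          ≤ (σ₂ ^ 2 / σ₁ ^ 2) * (r / (t - r)) + (σ₂ / σ₁) * (r / t) ∧
      (σ₂ ^ 2 / σ₁ ^ 2) * (r / (t - r)) + (σ₂ / σ₁) * (r / t)
          ≤ 4 * (σ₂ ^ 2 / σ₁ ^ 2) * (r / t) := by
  intro σbar σbarr r t hr hrt hrt2
  have ht : 0 < t := hr.trans hrt
  have hshift : ∫ s in (0:ℝ)..(t - r), σinf (r + s) ^ 2 = ∫ s in r..t, σinf s ^ 2 := by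
    simpa using intervalIntegral.integral_comp_add_left (fun s => σinf s ^ 2) r
      (a := 0) (b := t - r)
  have hsq : ∀ s, 0 ≤ s → σinf s ^ 2 ∈ Icc (σ₁ ^ 2) (σ₂ ^ 2) := fun s hs =>
    ⟨pow_le_pow_left₀ hσ₁.le (hrange s hs).1 2,
      pow_le_pow_left₀ (hσ₁.le.trans (hrange s hs).1) (hrange s hs).2 2⟩
  have hratio := abs_sqrt_intervalIntegral_div_sub_one_le (pow_pos hσ₁ 2) (hcont.pow 2) hsq
    hr.le hrt.le ht
  have hσ₂ : 0 < σ₂ := hσ₁.trans_le hσ₁₂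
  simp only [σbarr, σbar, hshift, sqrt_one_div_mul_mul_sqrt ht,
    sqrt_one_div_mul_mul_sqrt (sub_pos.mpr hrt)]
  constructor
  · calc _ ≤ σ₂ ^ 2 / σ₁ ^ 2 * (r / t) := by rwa [mul_div_mul_comm] at hratio
      _ ≤ σ₂ ^ 2 / σ₁ ^ 2 * (r / (t - r)) + σ₂ / σ₁ * (r / t) := by
        refine le_add_of_le_of_nonneg ?_ (by positivity)
        gcongr
        linarith
  · have hdiv := div_sub_le_two_mul_div hr hrt2
    have hσ := div_le_div_sq hσ₁ hσ₁₂
    calc σ₂ ^ 2 / σ₁ ^ 2 * (r / (t - r)) + σ₂ / σ₁ * (r / t)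
        ≤ σ₂ ^ 2 / σ₁ ^ 2 * (2 * (r / t)) + σ₂ ^ 2 / σ₁ ^ 2 * (r / t) := by gcongr
      _ = 3 * (σ₂ ^ 2 / σ₁ ^ 2) * (r / t) := by ring
      _ ≤ 4 * (σ₂ ^ 2 / σ₁ ^ 2) * (r / t) := by gcongr; norm_num

/-- comparison between the averaged diffusion coefficients
started at times `0` and `r`. -/
theorem stmt_18 (σ₁ σ₂ : ℝ) (hσ₁ : 0 < σ₁) (hσ₂ : 0 < σ₂) (hσ₁₂ : σ₁ ≤ σ₂)
    (σinf : ℝ → ℝ) (hcont : ContinuousOn σinf (Ici 0))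
    (hrange : ∀ s, 0 ≤ s → σinf s ∈ Icc σ₁ σ₂) :
    let σbar : ℝ → ℝ := fun t => Real.sqrt ((1 / t) * ∫ s in (0:ℝ)..t, σinf s ^ 2)
    let σbarr : ℝ → ℝ → ℝ := fun r u => Real.sqrt ((1 / u) * ∫ s in (0:ℝ)..u, σinf (r + s) ^ 2)
    ∀ r t : ℝ, 0 < r → r < t → r ≤ t / 2 →
      |σbarr r (t - r) * Real.sqrt (t - r) / (σbar t * Real.sqrt t) - 1|
          ≤ (σ₂ ^ 2 / σ₁ ^ 2) * (r / (t - r)) + (σ₂ / σ₁) * (r / t) ∧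
      (σ₂ ^ 2 / σ₁ ^ 2) * (r / (t - r)) + (σ₂ / σ₁) * (r / t)
          ≤ 4 * (σ₂ ^ 2 / σ₁ ^ 2) * (r / t) :=
  stmt_18_general σ₁ σ₂ hσ₁ hσ₁₂ σinf hcont hrange
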